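/- If the maximum of the expression Tr(A V Bᵀ Vᴴ) over complex n×n Hermitian projections A, B and unit-Hilbert-Schmidt-norm complex matrices V equals M, then the maximum of Tr(A' V' B'ᵀ V'ᵀ) over real 2n×2n symmetric projections A', B' and unit-Hilbert-Schmidt-norm real 2n×2n matrices V' is at least M. -/
import Mathlib


open Matrix Kronecker

/-- Realification: replace each complex entry `a + b i` by the real `2×2` block
`[[a, -b], [b, a]]`.  The row/column index `(j, s)` corresponds to row `2j + s`. -/
def Phi {n : ℕ} (A : Matrix (Fin n) (Fin n) ℂ) :
    Matrix (Fin n × Fin 2) (Fin n × Fin 2) ℝ :=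
  fun p q => !![(A p.1 q.1).re, -(A p.1 q.1).im;
                (A p.1 q.1).im,  (A p.1 q.1).re] p.2 q.2

lemma Phi_mul {n : ℕ} (A B : Matrix (Fin n) (Fin n) ℂ) :
    Phi (A * B) = Phi A * Phi B := by
  ext ⟨i, s⟩ ⟨j, t⟩
  simp only [Phi, Matrix.mul_apply, Fintype.sum_prod_type, Fin.sum_univ_two]
  fin_cases s <;> fin_cases t <;>
    simp only [Fin.mk_zero, Fin.mk_one, Fin.isValue, Matrix.of_apply, Matrix.cons_val',
      Matrix.cons_val_zero, Matrix.cons_val_one, Matrix.head_cons, Matrix.empty_val',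
      Matrix.cons_val_fin_one, Complex.re_sum, Complex.im_sum, neg_neg] <;>
  · first
    | (refine Finset.sum_congr rfl fun k _ => ?_ ; simp [Complex.mul_re, Complex.mul_im]; ring)
    | (rw [← Finset.sum_neg_distrib]; refine Finset.sum_congr rfl fun k _ => ?_;
       simp [Complex.mul_re, Complex.mul_im]; ring)

lemma Phi_transpose {n : ℕ} (A : Matrix (Fin n) (Fin n) ℂ) :
    (Phi A)ᵀ = Phi Aᴴ := by
  ext ⟨i, s⟩ ⟨j, t⟩
  fin_cases s <;> fin_cases t <;>
    simp [Phi, Matrix.transpose_apply, Matrix.conjTranspose_apply]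

lemma Phi_trace {n : ℕ} (A : Matrix (Fin n) (Fin n) ℂ) :
    (Phi A).trace = 2 * (A.trace).re := by
  simp [Matrix.trace, Phi, Fintype.sum_prod_type, Fin.sum_univ_two, Matrix.diag,
    Complex.re_sum, Finset.sum_add_distrib, two_mul]

/-- If `M` is the maximum of `Tr(A V Bᵀ Vᴴ)` over complex `n×n` Hermitian projections
`A`, `B` and normalized `V`, then the corresponding maximum over real `2n×2n` symmetric
projections and normalized real matrices is at least `M`. -/
theorem real_dimension_doubling_achieves_complex_value (n : ℕ) (M : ℝ)
    (hM : IsGreatest { r : ℝ | ∃ A B V : Matrix (Fin n) (Fin n) ℂ,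
        A * A = A ∧ Aᴴ = A ∧ B * B = B ∧ Bᴴ = B ∧ (V * Vᴴ).trace = 1 ∧
        ((A * V * Bᵀ * Vᴴ).trace).re = r } M) :
    ∃ r ∈ { r : ℝ | ∃ A' B' V' : Matrix (Fin n × Fin 2) (Fin n × Fin 2) ℝ,
        A' * A' = A' ∧ A'ᵀ = A' ∧ B' * B' = B' ∧ B'ᵀ = B' ∧ (V' * V'ᵀ).trace = 1 ∧
        (A' * V' * B'ᵀ * V'ᵀ).trace = r }, M ≤ r := by
  obtain ⟨A, B, V, hAA, hAH, hBB, hBH, hV, hr⟩ := hM.1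
  refine ⟨M, ?_, le_refl M⟩
  refine ⟨Phi A, Phi Bᵀ, (Real.sqrt 2)⁻¹ • Phi V, ?_, ?_, ?_, ?_, ?_, ?_⟩
  · rw [← Phi_mul, hAA]
  · rw [Phi_transpose, hAH]
  · rw [← Phi_mul, ← Matrix.transpose_mul, hBB]
  · rw [Phi_transpose]
    have hB' : Bᵀᴴ = Bᵀ := by
      ext i j
      have := congrFun (congrFun hBH j) i
      simpa [Matrix.conjTranspose_apply, Matrix.transpose_apply] using this
    rw [hB']
  · have h2 : (Real.sqrt 2)⁻¹ * (Real.sqrt 2)⁻¹ = 2⁻¹ := by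
      rw [← mul_inv]
      norm_num [Real.mul_self_sqrt]
    rw [Matrix.smul_mul, Matrix.transpose_smul, Matrix.mul_smul, smul_smul, h2,
      Phi_transpose, ← Phi_mul, Matrix.trace_smul, Phi_trace]
    rw [hV]
    norm_num
  · have h2 : (Real.sqrt 2)⁻¹ * (Real.sqrt 2)⁻¹ = 2⁻¹ := by
      rw [← mul_inv]
      norm_num [Real.mul_self_sqrt]
    have hBT : (Phi Bᵀ)ᵀ = Phi Bᵀ := by
      rw [Phi_transpose]
      have hB' : Bᵀᴴ = Bᵀ := by
        ext i j
        have := congrFun (congrFun hBH j) i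
        simpa [Matrix.conjTranspose_apply, Matrix.transpose_apply] using this
      rw [hB']
    rw [hBT, Matrix.transpose_smul]
    simp only [Matrix.smul_mul, Matrix.mul_smul, smul_smul]
    rw [h2, Phi_transpose, ← Phi_mul, ← Phi_mul, ← Phi_mul,
      Matrix.trace_smul, Phi_trace, ← hr]
    rw [smul_eq_mul]
    ring
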